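/- arXiv:math/0310227 — 2 statements merged into one kernel-verified Lean document; each statement's English description precedes it below -/
import Mathlib

section
/- Let (R, m, k) be an F-finite reduced local ring of characteristic p. For q = p^e define A_e = { r ∈ R : r ⊗ u = 0 in R^{(e)} ⊗_R E_R(k) }, where R^{(e)} is R viewed as an R-algebra via the e-th Frobenius and u is a socle generator of E_R(k). If R is F-pure, then the sequence of ideals A_e is non-increasing: A_e ⊆ A_{e-1} for all e ≥ 1. -/
set_option linter.unusedVariables false

open TensorProduct Filter IsLocalRing

section Defs

variable (R : Type*) [CommRing R] (p : ℕ) [Fact p.Prime] [CharP R p]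

/-- `M` with the `R`-action twisted by the `e`-th Frobenius: `r • m = r^{p^e} • m`.
For `M = R` this is the module `R^{(e)} ≅ R^{1/p^e}`. -/
def Twist (R : Type*) (p : ℕ) (M : Type*) (e : ℕ) : Type _ := M

instance (M : Type*) [AddCommGroup M] (e : ℕ) : AddCommGroup (Twist R p M e) :=
  inferInstanceAs (AddCommGroup M)

instance (M : Type*) [AddCommGroup M] [Module R M] (e : ℕ) : Module R (Twist R p M e) where
  smul r m := (r ^ p ^ e • (show M from m) : M)
  one_smul m := by
    change (1 : R) ^ p ^ e • (show M from m) = (show M from m)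
    rw [one_pow]; exact one_smul R (show M from m)
  mul_smul a b m := by
    change (a * b) ^ p ^ e • (show M from m) =
      a ^ p ^ e • (b ^ p ^ e • (show M from m))
    rw [mul_pow, mul_smul]
  smul_zero r := by
    change r ^ p ^ e • (0 : M) = (0 : M); simp
  smul_add r x y := by
    change r ^ p ^ e • ((show M from x) + (show M from y)) =
      r ^ p ^ e • (show M from x) + r ^ p ^ e • (show M from y)
    rw [smul_add]
  add_smul a b m := by
    change (a + b) ^ p ^ e • (show M from m) =
      a ^ p ^ e • (show M from m) + b ^ p ^ e • (show M from m)
    rw [add_pow_char_pow, add_smul]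
  zero_smul m := by
    change (0 : R) ^ p ^ e • (show M from m) = (0 : M)
    rw [zero_pow (pow_ne_zero e (Fact.out : p.Prime).ne_zero), zero_smul]

/-- The identity map `M → Twist R p M e`. -/
def toTwist (R : Type*) (p : ℕ) {M : Type*} (m : M) (e : ℕ) : Twist R p M e := m

/-- The map `φ_{c,e} : R → R^{1/p^e}`, `1 ↦ c^{1/p^e}`, splits over `R`. -/
def SplitsFrob (c : R) (e : ℕ) : Prop :=
  ∃ ψ : Twist R p R e →ₗ[R] R, ψ (toTwist R p c e) = 1

/-- The splitting prime `𝒫(R)`. -/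
def SplittingPrimeSet : Set R := { c | ∀ᶠ e in atTop, ¬ SplitsFrob R p c e }

/-- `R` is `F`-pure: `R → R^{1/p}` splits. -/
def IsFPure : Prop := SplitsFrob R p 1 1

/-- `R` is `F`-finite: `R^{1/p}` is a finite `R`-module. -/
def IsFFinite : Prop := Module.Finite R (Twist R p R 1)

/-- `R` is strongly `F`-regular. -/
def StronglyFRegular : Prop :=
  ∀ c : R, (∀ Q ∈ minimalPrimes R, c ∉ Q) → ∃ e, SplitsFrob R p c e

/-- `n` is the maximal rank of a free direct summand of `M`:
`M ≅ R^n ⊕ N` with `N` having no nonzero free direct summand. -/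
def MaxFreeRank (M : Type*) [AddCommGroup M] [Module R M] (n : ℕ) : Prop :=
  ∃ (N : Submodule R M) (_ : M ≃ₗ[R] ((Fin n → R) × N)),
    ¬ ∃ g : N →ₗ[R] R, Function.Surjective g

end Defs

section Hull

variable (R : Type*) [CommRing R] [IsLocalRing R]

/-- `E` is an injective hull of the residue field, with socle generator `u`. -/
def IsInjHullSocle (E : Type*) [AddCommGroup E] [Module R E] (u : E) : Prop :=
  Module.Injective R E ∧ u ≠ 0 ∧ (∀ r ∈ maximalIdeal R, r • u = 0) ∧
    (∀ x : E, (∀ r ∈ maximalIdeal R, r • x = 0) → x ∈ Submodule.span R {u}) ∧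
    ∀ N : Submodule R E, N ≠ ⊥ → u ∈ N

end Hull

section Ae

variable (R : Type*) [CommRing R] (p : ℕ) [Fact p.Prime] [CharP R p]

/-- The ideal `A_e = {r ∈ R : r ⊗ u = 0 in R^{(e)} ⊗_R E}`. -/
def AeSet (E : Type*) [AddCommGroup E] [Module R E] (u : E) (e : ℕ) : Set R :=
  { r | (toTwist R p r e ⊗ₜ[R] u : Twist R p R e ⊗[R] E) = 0 }

end Ae

/-- The length of a module, as the Krull dimension of its lattice of submodules. -/
noncomputable def moduleLength (R M : Type*) [CommRing R] [AddCommGroup M] [Module R M] :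
    WithBot ℕ∞ := Order.krullDim (Submodule R M)

/-- A regular local ring: the maximal ideal is generated by `dim R` elements. -/
def IsRegularLocal (R : Type*) [CommRing R] [IsLocalRing R] : Prop :=
  IsNoetherianRing R ∧ ∃ s : Finset R,
    Ideal.span (s : Set R) = maximalIdeal R ∧ (s.card : WithBot ℕ∞) = ringKrullDim R

/-- For an F-finite reduced F-pure local ring `R` of characteristic `p`, the
ideals `A_e = {r : r ⊗ u = 0 in R^{(e)} ⊗ E_R(k)}` form a non-increasing sequence:
`A_e ⊆ A_{e-1}` for all `e ≥ 1`. -/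
theorem AeSet_antitone
    (R : Type*) [CommRing R] [IsNoetherianRing R] [IsLocalRing R] [IsReduced R]
    (p : ℕ) [Fact p.Prime] [CharP R p] (hFF : IsFFinite R p)
    (hpure : IsFPure R p)
    (E : Type*) [AddCommGroup E] [Module R E] (u : E) (hE : IsInjHullSocle R E u)
    (e : ℕ) (he : 1 ≤ e) :
    AeSet R p E u e ⊆ AeSet R p E u (e - 1) := by
  intro r hr
  obtain ⟨ψ, hψ⟩ := hpure
  have hp : p.Prime := Fact.out
  have hpe : p ^ e = p ^ (e - 1) * p := by
    rw [← pow_succ, Nat.sub_add_cancel he]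
  have hr' : (toTwist R p r e ⊗ₜ[R] u : Twist R p R e ⊗[R] E) = 0 := hr
  -- key computation for ψ
  have key : ∀ (t y : R), ψ (show Twist R p R 1 from (t ^ p * y)) =
      t * ψ (show Twist R p R 1 from y) := by
    intro t y
    have h := ψ.map_smul t (show Twist R p R 1 from y)
    have h2 : (t • (show Twist R p R 1 from y)) =
        (show Twist R p R 1 from (t ^ p * y)) := by
      show t ^ p ^ 1 * y = t ^ p * y
      rw [pow_one]
    rw [h2] at h
    rw [h, smul_eq_mul]
  -- multiplication by r^(p-1) is R-linear on Twist e
  let m : Twist R p R e →ₗ[R] Twist R p R e :=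
    { toFun := fun x => (r ^ (p - 1) * (show R from x) : R)
      map_add' := fun x y => by
        change r ^ (p - 1) * ((show R from x) + (show R from y)) =
          r ^ (p - 1) * (show R from x) + r ^ (p - 1) * (show R from y)
        ring
      map_smul' := fun s x => by
        change r ^ (p - 1) * (s ^ p ^ e * (show R from x)) =
          s ^ p ^ e * (r ^ (p - 1) * (show R from x))
        ring }
  -- the twisted splitting σ : Twist e → Twist (e-1)
  let σ : Twist R p R e →ₗ[R] Twist R p R (e - 1) :=
    { toFun := fun x => (ψ (show Twist R p R 1 from (show R from x)) : R)
      map_add' := fun x y => ψ.map_add _ _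
      map_smul' := fun s x => by
        change ψ (show Twist R p R 1 from (s ^ p ^ e * (show R from x))) =
          s ^ p ^ (e - 1) * ψ (show Twist R p R 1 from (show R from x))
        rw [hpe, pow_mul]
        exact key (s ^ p ^ (e - 1)) (show R from x) }
  -- step 1: r^p ⊗ u = 0 in Twist e ⊗ E
  have h1 : (toTwist R p (r ^ p) e ⊗ₜ[R] u : Twist R p R e ⊗[R] E) = 0 := by
    have h := congrArg (TensorProduct.map m LinearMap.id) hr'
    rw [map_zero, TensorProduct.map_tmul, LinearMap.id_apply] at h
    have hm : m (toTwist R p r e) = toTwist R p (r ^ p) e := by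
      show r ^ (p - 1) * r = r ^ p
      rw [← pow_succ, Nat.sub_add_cancel hp.one_le]
    rwa [hm] at h
  -- step 2: apply σ ⊗ id
  have hψr : σ (toTwist R p (r ^ p) e) = toTwist R p r (e - 1) := by
    show ψ (show Twist R p R 1 from (r ^ p : R)) = r
    have hc : (r ^ p : R) = r ^ p * 1 := by ring
    rw [hc, key r 1]
    have h1' : (show Twist R p R 1 from (1 : R)) = toTwist R p (1 : R) 1 := rfl
    rw [h1', hψ, mul_one]
  show (toTwist R p r (e - 1) ⊗ₜ[R] u : Twist R p R (e - 1) ⊗[R] E) = 0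
  have h2 := congrArg (TensorProduct.map σ LinearMap.id) h1
  rw [map_zero, TensorProduct.map_tmul, LinearMap.id_apply, hψr] at h2
  exact h2
end

section
/- Let R = S/I be an F-pure F-finite local ring of characteristic p, a homomorphic image of a regular local ring S, with splitting prime P. Then R/P is strongly F-regular. -/
set_option linter.unusedVariables false

open TensorProduct Filter IsLocalRing

section AuxCompat

variable {R : Type*} [CommRing R] (p : ℕ) [Fact p.Prime] [CharP R p]

lemma twist_smul_eq (e : ℕ) (r m : R) :
    (r • (toTwist R p m e) : Twist R p R e) = toTwist R p (r ^ p ^ e * m) e := by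
  show r ^ p ^ e • m = r ^ p ^ e * m
  rw [smul_eq_mul]

/-- A `p^{-e}`-linear map `ψ : R^{1/p^e} → R` induces `R^{1/p^{e+e'}} → R^{1/p^{e'}}`. -/
def liftTwist (e e' : ℕ) (ψ : Twist R p R e →ₗ[R] R) :
    Twist R p R (e + e') →ₗ[R] Twist R p R e' where
  toFun x := toTwist R p (ψ (toTwist R p (show R from x) e)) e'
  map_add' x y := by
    show ψ (toTwist R p ((show R from x) + (show R from y)) e) =
      ψ (toTwist R p (show R from x) e) + ψ (toTwist R p (show R from y) e)
    exact map_add ψ _ _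
  map_smul' r x := by
    show ψ (toTwist R p (r ^ p ^ (e + e') * (show R from x)) e) =
      r ^ p ^ e' * ψ (toTwist R p (show R from x) e)
    have h1 : r ^ p ^ (e + e') * (show R from x)
        = (r ^ p ^ e') ^ p ^ e * (show R from x) := by
      rw [← pow_mul, ← pow_add, Nat.add_comm e' e]
    rw [h1]
    have h2 : (toTwist R p ((r ^ p ^ e') ^ p ^ e * (show R from x)) e : Twist R p R e)
        = (r ^ p ^ e') • toTwist R p (show R from x) e := (twist_smul_eq p e _ _).symm
    rw [h2, map_smul, smul_eq_mul]

/-- The splitting prime is compatible with every `p^{-e}`-linear map. -/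
lemma splittingPrime_compatible (P : Ideal R)
    (hP : (P : Set R) = SplittingPrimeSet R p) (e : ℕ)
    (ψ : Twist R p R e →ₗ[R] R) {a : R} (ha : a ∈ P) :
    ψ (toTwist R p a e) ∈ P := by
  by_contra h
  have haS : a ∈ SplittingPrimeSet R p := by rw [← hP]; exact ha
  have hS : ψ (toTwist R p a e) ∉ SplittingPrimeSet R p := by rw [← hP]; exact h
  have hfreq : ∃ᶠ e' in atTop, SplitsFrob R p (ψ (toTwist R p a e)) e' := by
    have := Filter.not_eventually.mp hS
    exact this.mono fun e' h' => not_not.mp h'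
  obtain ⟨N, hN⟩ := Filter.eventually_atTop.mp haS
  obtain ⟨e', hNe', φ', hφ'⟩ := Filter.frequently_atTop.mp hfreq N
  refine hN (e + e') (le_trans hNe' (Nat.le_add_left e' e)) ?_
  refine ⟨φ'.comp (liftTwist p e e' ψ), ?_⟩
  show φ' (toTwist R p (ψ (toTwist R p a e)) e') = 1
  exact hφ'

end AuxCompat

/-- Let `R = S/I` be an F-pure F-finite reduced local ring of
characteristic `p`, an image of a regular local ring `S`, with splitting prime `P`. Then
`R/P` is strongly F-regular. -/
theorem quotient_by_splittingPrime_stronglyFRegular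
    (S : Type*) [CommRing S] [IsLocalRing S] (hreg : IsRegularLocal S)
    (p : ℕ) [Fact p.Prime] [CharP S p]
    (I : Ideal S) (hrad : I.IsRadical) (hItop : I ≠ ⊤)
    [IsLocalRing (S ⧸ I)] [CharP (S ⧸ I) p]
    (hFF : IsFFinite (S ⧸ I) p) (hpure : IsFPure (S ⧸ I) p)
    (P : Ideal (S ⧸ I)) (hP : (P : Set (S ⧸ I)) = SplittingPrimeSet (S ⧸ I) p)
    [CharP ((S ⧸ I) ⧸ P) p] :
    StronglyFRegular ((S ⧸ I) ⧸ P) p := by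
  intro c' hc'
  have hnt : Nontrivial ((S ⧸ I) ⧸ P) :=
    CharP.nontrivial_of_char_ne_one (R := (S ⧸ I) ⧸ P) (v := p) (Nat.Prime.ne_one Fact.out)
  have hc0 : c' ≠ 0 := by
    intro h0
    obtain ⟨M, hM⟩ := Ideal.exists_maximal ((S ⧸ I) ⧸ P)
    obtain ⟨Q, hQ, _⟩ := Ideal.exists_minimalPrimes_le (I := ⊥) (J := M) bot_le
    exact hc' Q hQ (by rw [h0]; exact Q.zero_mem)
  obtain ⟨c, rfl⟩ := Ideal.Quotient.mk_surjective c'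
  have hcP : c ∉ P := fun h => hc0 (Ideal.Quotient.eq_zero_iff_mem.mpr h)
  have hcS : c ∉ SplittingPrimeSet (S ⧸ I) p := by rw [← hP]; exact hcP
  have hfreq : ∃ᶠ e in atTop, SplitsFrob (S ⧸ I) p c e := by
    have := Filter.not_eventually.mp hcS
    exact this.mono fun e h' => not_not.mp h'
  obtain ⟨e, ψ, hψ⟩ := hfreq.exists
  refine ⟨e, ?_⟩
  have hcompat : ∀ a ∈ P, ψ (toTwist (S ⧸ I) p a e) ∈ P :=
    fun a ha => splittingPrime_compatible p P hP e ψ ha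
  have hker : ∀ a b : S ⧸ I, Ideal.Quotient.mk P a = Ideal.Quotient.mk P b →
      Ideal.Quotient.mk P (ψ (toTwist (S ⧸ I) p a e)) =
        Ideal.Quotient.mk P (ψ (toTwist (S ⧸ I) p b e)) := by
    intro a b hab
    rw [Ideal.Quotient.eq] at hab ⊢
    have hsub : ψ (toTwist (S ⧸ I) p a e) - ψ (toTwist (S ⧸ I) p b e)
        = ψ (toTwist (S ⧸ I) p (a - b) e) := (map_sub ψ _ _).symm
    rw [hsub]
    exact hcompat _ hab
  have hsurj : Function.Surjective (Ideal.Quotient.mk P) := Ideal.Quotient.mk_surjective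
  set f : (S ⧸ I) ⧸ P → (S ⧸ I) ⧸ P :=
    fun x => Ideal.Quotient.mk P (ψ (toTwist (S ⧸ I) p (Function.surjInv hsurj x) e)) with hf
  have key : ∀ a : S ⧸ I, f (Ideal.Quotient.mk P a)
      = Ideal.Quotient.mk P (ψ (toTwist (S ⧸ I) p a e)) := fun a =>
    hker _ a (Function.surjInv_eq hsurj (Ideal.Quotient.mk P a))
  refine ⟨{ toFun := fun x => f (show (S ⧸ I) ⧸ P from x)
            map_add' := ?_
            map_smul' := ?_ }, ?_⟩
  · intro x y
    obtain ⟨a, ha⟩ := hsurj (show (S ⧸ I) ⧸ P from x)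
    obtain ⟨b, hb⟩ := hsurj (show (S ⧸ I) ⧸ P from y)
    show f ((show (S ⧸ I) ⧸ P from x) + (show (S ⧸ I) ⧸ P from y)) =
      f (show (S ⧸ I) ⧸ P from x) + f (show (S ⧸ I) ⧸ P from y)
    rw [← ha, ← hb, ← map_add, key, key, key]
    have step : ψ (toTwist (S ⧸ I) p (a + b) e)
        = ψ (toTwist (S ⧸ I) p a e) + ψ (toTwist (S ⧸ I) p b e) :=
      map_add ψ (toTwist (S ⧸ I) p a e) (toTwist (S ⧸ I) p b e)
    rw [step, map_add]
  · intro r x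
    show f (r ^ p ^ e • (show (S ⧸ I) ⧸ P from x)) = r * f (show (S ⧸ I) ⧸ P from x)
    rw [smul_eq_mul]
    obtain ⟨r₀, hr₀⟩ := hsurj r
    obtain ⟨a, ha⟩ := hsurj (show (S ⧸ I) ⧸ P from x)
    rw [← hr₀, ← ha, ← map_pow, ← map_mul, key, key]
    have h2 : (toTwist (S ⧸ I) p (r₀ ^ p ^ e * a) e : Twist (S ⧸ I) p (S ⧸ I) e)
        = r₀ • toTwist (S ⧸ I) p a e := (twist_smul_eq p e _ _).symm
    rw [h2, map_smul, smul_eq_mul, map_mul]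
  · show f (Ideal.Quotient.mk P c) = 1
    rw [key, hψ, map_one]
end
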